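/- Let G be a finite group with |G| > 1. Then 𝒫(G) is K_{2,2}-free (contains no copy of the complete bipartite graph K_{2,2}, i.e. no 4-cycle) if and only if one of the following holds: (i) G is a p-group for some prime p; (ii) |G| = p^α · q for distinct primes p, q and some α ≥ 1, and the Sylow q-subgroup of G is normal (equivalently, G has a unique subgroup of order q); (iii) G is cyclic of order pqr for pairwise distinct primes p, q, r. -/

import Mathlib

/-!
Two subgroups are adjacent exactly when the sets of primes dividing their orders are disjoint
(and nonempty). If a prime `p` admits two distinct nontrivial `p`-subgroups, then any two
nontrivial subgroups of order prime to `p` must coincide, or the four would span a `K₂,₂`.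
Applied to subgroups of prime and prime-square order, this excludes four prime divisors of `|G|`;
with three, `|G|` is squarefree and every Sylow subgroup is unique, so `G` is a nilpotent Z-group,
hence cyclic; with two primes `p, q`, one of them, say `q`, divides `|G|` exactly once and `G` has
a single subgroup of order `q`. Conversely, a `p`-group has no edges at all; if `|G| = p ^ α * q`
every edge meets the subgroup of order `q`; and in a cyclic group of order `p * q * r` a subgroup
is determined by its set of prime divisors, while the two sides of a `K₂,₂` would need four
distinct primes.
-/

open SimpleGraph

/-- The coprime graph of subgroups of a group `G`: vertices are the proper nontrivial
subgroups of `G`, and two distinct vertices are adjacent iff their orders are coprime. -/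
def coprimeGraph (G : Type*) [Group G] :
    SimpleGraph {H : Subgroup G // H ≠ ⊥ ∧ H ≠ ⊤} where
  Adj H K := H ≠ K ∧ Nat.Coprime (Nat.card H.1) (Nat.card K.1)
  symm := ⟨fun _ _ h => ⟨h.1.symm, h.2.symm⟩⟩
  loopless := ⟨fun _ h => h.1 rfl⟩

theorem Finset.two_le_card_union_of_ne {α : Type*} [DecidableEq α] {s t : Finset α}
    (hs : s.Nonempty) (ht : t.Nonempty) (hst : s ≠ t) : 2 ≤ (s ∪ t).card := by
  by_contra! h
  have hs' : (s ∪ t).card ≤ s.card := by have := hs.card_pos; omega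
  have ht' : (s ∪ t).card ≤ t.card := by have := ht.card_pos; omega
  exact hst ((Finset.eq_of_subset_of_card_le Finset.subset_union_left hs').trans
    (Finset.eq_of_subset_of_card_le Finset.subset_union_right ht').symm)

namespace SimpleGraph

variable {V W : Type*} {Γ : SimpleGraph V}

theorem isContained_iff_exists_injective_hom {A : SimpleGraph W} :
    A ⊑ Γ ↔ ∃ f : A →g Γ, Function.Injective f :=
  ⟨fun ⟨f⟩ => ⟨f.toHom, f.injective⟩, fun ⟨f, hf⟩ => ⟨f.toCopy hf⟩⟩

theorem completeBipartiteGraph_two_two_isContained_iff :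
    completeBipartiteGraph (Fin 2) (Fin 2) ⊑ Γ ↔
      ∃ a b c d, a ≠ b ∧ c ≠ d ∧ Γ.Adj a c ∧ Γ.Adj a d ∧ Γ.Adj b c ∧ Γ.Adj b d := by
  rw [isContained_iff_exists_injective_hom]
  constructor
  · rintro ⟨f, hf⟩
    refine ⟨f (.inl 0), f (.inl 1), f (.inr 0), f (.inr 1), hf.ne (by simp), hf.ne (by simp),
      ?_, ?_, ?_, ?_⟩ <;> exact f.map_rel (by simp)
  · rintro ⟨a, b, c, d, hab, hcd, hac, had, hbc, hbd⟩
    refine ⟨⟨Sum.elim ![a, b] ![c, d], ?_⟩, ?_⟩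
    · rintro (i | i) (j | j) h <;> simp at h <;> fin_cases i <;> fin_cases j <;>
        simp [hac, had, hbc, hbd, hac.symm, had.symm, hbc.symm, hbd.symm]
    · have := hac.ne; have := had.ne; have := hbc.ne; have := hbd.ne
      rintro (i | i) (j | j) h <;> fin_cases i <;> fin_cases j <;> simp_all [eq_comm]

theorem completeBipartiteGraph_two_two_free_of_subsingleton_cover {S : Set V}
    (hS : S.Subsingleton) (hcover : ∀ v w, Γ.Adj v w → v ∈ S ∨ w ∈ S) :
    (completeBipartiteGraph (Fin 2) (Fin 2)).Free Γ := by
  rw [Free, completeBipartiteGraph_two_two_isContained_iff]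
  rintro ⟨a, b, c, d, hab, hcd, hac, had, hbc, -⟩
  rcases hcover a c hac with ha | hc
  · rcases hcover b c hbc with hb | hc
    · exact hab (hS ha hb)
    · exact hac.ne (hS ha hc)
  · rcases hcover a d had with ha | hd
    · exact hac.ne (hS ha hc)
    · exact hcd (hS hc hd)

/-- Each side of a `K₂,₂` carries two distinct nonempty labels, so the two sides use four
distinct elements between them. -/
theorem completeBipartiteGraph_two_two_free_of_injective_disjoint {α : Type*} [DecidableEq α]
    {π : V → Finset α} {s : Finset α} (hs : s.card ≤ 3) (hπ : Function.Injective π)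
    (hne : ∀ v, (π v).Nonempty) (hsub : ∀ v, π v ⊆ s)
    (hdisj : ∀ v w, Γ.Adj v w → Disjoint (π v) (π w)) :
    (completeBipartiteGraph (Fin 2) (Fin 2)).Free Γ := by
  rw [Free, completeBipartiteGraph_two_two_isContained_iff]
  rintro ⟨a, b, c, d, hab, hcd, hac, had, hbc, hbd⟩
  have hleft := Finset.two_le_card_union_of_ne (hne a) (hne b) (hπ.ne hab)
  have hright := Finset.two_le_card_union_of_ne (hne c) (hne d) (hπ.ne hcd)
  have hsides : Disjoint (π a ∪ π b) (π c ∪ π d) := by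
    simp only [Finset.disjoint_union_left, Finset.disjoint_union_right]
    exact ⟨⟨hdisj _ _ hac, hdisj _ _ hbc⟩, hdisj _ _ had, hdisj _ _ hbd⟩
  have hcard := Finset.card_le_card (Finset.union_subset
    (Finset.union_subset (hsub a) (hsub b)) (Finset.union_subset (hsub c) (hsub d)))
  rw [Finset.card_union_of_disjoint hsides] at hcard
  omega

end SimpleGraph

theorem Nat.eq_pow_factorization_mul_of_primeFactors_eq_pair {n p q : ℕ} (hn : n ≠ 0)
    (hpq : p ≠ q) (hP : n.primeFactors = {p, q}) (hq : ¬ q ^ 2 ∣ n) :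
    n = p ^ n.factorization p * q := by
  have hqP : q ∈ n.primeFactors := by simp [hP]
  have hq1 : n.factorization q = 1 := by
    have hpos := (Nat.prime_of_mem_primeFactors hqP).factorization_pos_of_dvd hn
      (Nat.dvd_of_mem_primeFactors hqP)
    have hlt := (Nat.prime_of_mem_primeFactors hqP).pow_dvd_iff_le_factorization hn |>.not.mp hq
    omega
  conv_lhs => rw [← Nat.prod_factorization_pow_eq_self hn]
  rw [Finsupp.prod, Nat.support_factorization, hP, Finset.prod_pair hpq, hq1, pow_one]

theorem IsCyclic.subgroup_eq_of_card_eq {G : Type*} [Group G] [Finite G] [IsCyclic G]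
    {H K : Subgroup G} (h : Nat.card H = Nat.card K) : H = K := by
  classical
  have := Fintype.ofFinite G
  set d := Nat.card H
  have hroots : ∀ L : Subgroup G, Nat.card L = d →
      (L : Set G).toFinset = Finset.univ.filter (fun x : G => x ^ d = 1) := by
    intro L hL
    refine Finset.eq_of_subset_of_card_le (fun x hx => ?_) ?_
    · rw [Set.mem_toFinset] at hx
      simpa [← hL, orderOf_dvd_iff_pow_eq_one] using L.orderOf_dvd_natCard hx
    · rw [← Nat.card_eq_card_toFinset, SetLike.coe_sort_coe, hL]
      exact IsCyclic.card_pow_eq_one_le Nat.card_pos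
  exact SetLike.coe_injective (Set.toFinset_inj.mp ((hroots H rfl).trans (hroots K h.symm).symm))

def nontrivialPSubgroups (G : Type*) [Group G] (p : ℕ) : Set (Subgroup G) :=
  {H | H ≠ ⊥ ∧ IsPGroup p H}

section nontrivialPSubgroups

variable {G : Type*} [Group G] {p : ℕ}

theorem Subgroup.Normal.of_subsingleton_nontrivialPSubgroups {P : Subgroup G}
    (hP : IsPGroup p P) (h : (nontrivialPSubgroups G p).Subsingleton) : P.Normal := by
  by_cases hbot : P = ⊥
  · rw [hbot]
    infer_instance
  have : P.Characteristic := Subgroup.characteristic_iff_map_eq.mpr fun ϕ =>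
    h ⟨(P.map_eq_bot_iff_of_injective ϕ.injective).not.mpr hbot, hP.map _⟩ ⟨hbot, hP⟩
  exact P.normal_of_characteristic

theorem dvd_card_of_mem_nontrivialPSubgroups (hp : p.Prime) {H : Subgroup G}
    (hH : H ∈ nontrivialPSubgroups G p) : p ∣ Nat.card G := by
  have := Fact.mk hp
  refine (hH.2.card_eq_or_dvd.resolve_left fun h => hH.1 ?_).trans H.card_subgroup_dvd_card
  exact Subgroup.card_eq_one.mp h

variable [Finite G]

theorem mem_nontrivialPSubgroups_of_card_eq (hp : p.Prime) {H : Subgroup G} {k : ℕ}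
    (hk : k ≠ 0) (hH : Nat.card H = p ^ k) : H ∈ nontrivialPSubgroups G p :=
  ⟨(H.one_lt_card_iff_ne_bot).mp (hH ▸ Nat.one_lt_pow hk hp.one_lt), IsPGroup.of_card hH⟩

theorem not_dvd_card_of_mem_nontrivialPSubgroups {q : ℕ} (hp : p.Prime) (hq : q.Prime)
    (hpq : p ≠ q) {H : Subgroup G} (hH : H ∈ nontrivialPSubgroups G q) : ¬ p ∣ Nat.card H := by
  have := Fact.mk hq
  obtain ⟨k, hk⟩ := IsPGroup.iff_card.mp hH.2
  rw [hk]
  exact fun h => hpq ((Nat.prime_dvd_prime_iff_eq hp hq).mp (hp.dvd_of_dvd_pow h))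

theorem Subgroup.ne_bot_of_card_eq_prime (hp : p.Prime) {H : Subgroup G}
    (hH : Nat.card H = p) : H ≠ ⊥ :=
  (H.one_lt_card_iff_ne_bot).mp (hH ▸ hp.one_lt)

theorem exists_subgroup_card_eq_prime (hp : p.Prime) (h : p ∣ Nat.card G) :
    ∃ H : Subgroup G, Nat.card H = p := by
  have := Fact.mk hp
  simpa using Sylow.exists_subgroup_card_pow_prime (G := G) p (n := 1) (by simpa using h)

theorem not_sq_dvd_card_of_subsingleton_nontrivialPSubgroups (hp : p.Prime)
    (h : (nontrivialPSubgroups G p).Subsingleton) : ¬ p ^ 2 ∣ Nat.card G := by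
  intro h2
  have := Fact.mk hp
  obtain ⟨H, hH⟩ :=
    Sylow.exists_subgroup_card_pow_prime p ((pow_dvd_pow p one_le_two).trans h2)
  obtain ⟨K, hK⟩ := Sylow.exists_subgroup_card_pow_prime p h2
  have hHK : H = K := h (mem_nontrivialPSubgroups_of_card_eq hp one_ne_zero hH)
    (mem_nontrivialPSubgroups_of_card_eq hp two_ne_zero hK)
  rw [hHK, hK] at hH
  exact absurd (Nat.pow_right_injective hp.two_le hH) (by norm_num)

theorem existsUnique_card_eq_of_subsingleton_nontrivialPSubgroups (hp : p.Prime)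
    (hpG : p ∣ Nat.card G) (h : (nontrivialPSubgroups G p).Subsingleton) :
    ∃! H : Subgroup G, Nat.card H = p := by
  obtain ⟨H, hH⟩ := exists_subgroup_card_eq_prime hp hpG
  have hmem : ∀ K : Subgroup G, Nat.card K = p → K ∈ nontrivialPSubgroups G p := fun K hK =>
    mem_nontrivialPSubgroups_of_card_eq hp one_ne_zero (hK.trans (pow_one p).symm)
  exact ⟨H, hH, fun K hK => h (hmem K hK) (hmem H hH)⟩

theorem squarefree_card_of_subsingleton_nontrivialPSubgroups
    (h : ∀ p, p.Prime → p ∣ Nat.card G → (nontrivialPSubgroups G p).Subsingleton) :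
    Squarefree (Nat.card G) :=
  Nat.squarefree_iff_prime_squarefree.mpr fun p hp hpp =>
    not_sq_dvd_card_of_subsingleton_nontrivialPSubgroups hp (h p hp (dvd_of_mul_left_dvd hpp))
      (by rwa [sq])

/-- Uniqueness of the Sylow subgroups makes `G` nilpotent, and squarefree order makes it a
Z-group; a nilpotent Z-group is cyclic. -/
theorem isCyclic_of_subsingleton_nontrivialPSubgroups
    (h : ∀ p, p.Prime → p ∣ Nat.card G → (nontrivialPSubgroups G p).Subsingleton) :
    IsCyclic G := by
  have := IsZGroup.of_squarefree (squarefree_card_of_subsingleton_nontrivialPSubgroups h)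
  have : Group.IsNilpotent G := Group.isNilpotent_of_finite_tfae.out 3 0 |>.mp fun p hp P => by
    refine Subgroup.Normal.of_subsingleton_nontrivialPSubgroups P.isPGroup' ?_
    by_cases hpG : p ∣ Nat.card G
    · exact h p hp.out hpG
    · exact fun H hH => absurd (dvd_card_of_mem_nontrivialPSubgroups hp.out hH) hpG
  infer_instance

end nontrivialPSubgroups

theorem exists_isPGroup_iff_card_primeFactors_le_one {G : Type*} [Group G] [Finite G] :
    (∃ p, p.Prime ∧ IsPGroup p G) ↔ (Nat.card G).primeFactors.card ≤ 1 := by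
  constructor
  · rintro ⟨p, hp, hG⟩
    have := Fact.mk hp
    obtain ⟨k, hk⟩ := IsPGroup.iff_card.mp hG
    refine Finset.card_le_one_iff_subset_singleton.mpr ⟨p, fun x hx => ?_⟩
    rw [hk, Nat.mem_primeFactors] at hx
    exact Finset.mem_singleton.mpr
      ((Nat.prime_dvd_prime_iff_eq hx.1 hp).mp (hx.1.dvd_of_dvd_pow hx.2.1))
  · intro h
    obtain ⟨p, hp, hP⟩ : ∃ p, p.Prime ∧ (Nat.card G).primeFactors ⊆ {p} := by
      rcases (Nat.card G).primeFactors.eq_empty_or_nonempty with h0 | ⟨p, hp⟩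
      · exact ⟨2, Nat.prime_two, by simp [h0]⟩
      · exact ⟨p, Nat.prime_of_mem_primeFactors hp,
          fun x hx => Finset.mem_singleton.mpr (Finset.card_le_one.mp h x hx p hp)⟩
    refine ⟨p, hp, IsPGroup.of_card (Nat.eq_prime_pow_of_unique_prime_dvd Nat.card_pos.ne' ?_)⟩
    exact fun hd hdG =>
      Finset.mem_singleton.mp (hP (Nat.mem_primeFactors.mpr ⟨hd, hdG, Nat.card_pos.ne'⟩))

namespace coprimeGraph

variable {G : Type*} [Group G]

theorem ne_top_of_coprime {H K : Subgroup G} (hK : K ≠ ⊥)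
    (h : Nat.Coprime (Nat.card H) (Nat.card K)) : H ≠ ⊤ := by
  rintro rfl
  rw [Subgroup.card_top] at h
  exact hK (Subgroup.card_eq_one.mp (h.symm.eq_one_of_dvd K.card_subgroup_dvd_card))

theorem adj_of_coprime {H K : Subgroup G} (hH : H ≠ ⊥) (hK : K ≠ ⊥)
    (h : Nat.Coprime (Nat.card H) (Nat.card K)) :
    (coprimeGraph G).Adj ⟨H, hH, ne_top_of_coprime hK h⟩
      ⟨K, hK, ne_top_of_coprime hH h.symm⟩ := by
  refine ⟨fun hHK => hH ?_, h⟩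
  cases congrArg Subtype.val hHK
  exact Subgroup.card_eq_one.mp ((Nat.coprime_self _).mp h)

theorem completeBipartiteGraph_two_two_isContained {H₁ H₂ K₁ K₂ : Subgroup G}
    (hH : H₁ ≠ H₂) (hK : K₁ ≠ K₂) (hH₁ : H₁ ≠ ⊥) (hH₂ : H₂ ≠ ⊥) (hK₁ : K₁ ≠ ⊥) (hK₂ : K₂ ≠ ⊥)
    (h : Nat.Coprime (Nat.card H₁ * Nat.card H₂) (Nat.card K₁ * Nat.card K₂)) :
    completeBipartiteGraph (Fin 2) (Fin 2) ⊑ coprimeGraph G := by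
  simp only [Nat.coprime_mul_iff_left, Nat.coprime_mul_iff_right] at h
  obtain ⟨⟨h₁₁, h₂₁⟩, h₁₂, h₂₂⟩ := h
  exact completeBipartiteGraph_two_two_isContained_iff.mpr
    ⟨_, _, _, _, fun h => hH (congrArg Subtype.val h), fun h => hK (congrArg Subtype.val h),
      adj_of_coprime hH₁ hK₁ h₁₁, adj_of_coprime hH₁ hK₂ h₁₂,
      adj_of_coprime hH₂ hK₁ h₂₁, adj_of_coprime hH₂ hK₂ h₂₂⟩

variable [Finite G]

theorem one_lt_card (v : {H : Subgroup G // H ≠ ⊥ ∧ H ≠ ⊤}) : 1 < Nat.card v.1 :=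
  (v.1.one_lt_card_iff_ne_bot).mpr v.2.1

theorem primeFactors_subset (v : {H : Subgroup G // H ≠ ⊥ ∧ H ≠ ⊤}) :
    (Nat.card v.1).primeFactors ⊆ (Nat.card G).primeFactors :=
  Nat.primeFactors_mono v.1.card_subgroup_dvd_card Nat.card_pos.ne'

theorem two_le_card_primeFactors_of_adj {v w : {H : Subgroup G // H ≠ ⊥ ∧ H ≠ ⊤}}
    (h : (coprimeGraph G).Adj v w) : 2 ≤ (Nat.card G).primeFactors.card := by
  have hv := (Nat.nonempty_primeFactors.mpr (one_lt_card v)).card_pos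
  have hw := (Nat.nonempty_primeFactors.mpr (one_lt_card w)).card_pos
  calc 2 ≤ (Nat.card v.1).primeFactors.card + (Nat.card w.1).primeFactors.card := by omega
    _ = ((Nat.card v.1).primeFactors ∪ (Nat.card w.1).primeFactors).card :=
      (Finset.card_union_of_disjoint h.2.disjoint_primeFactors).symm
    _ ≤ _ := Finset.card_le_card
      (Finset.union_subset (primeFactors_subset v) (primeFactors_subset w))

theorem eq_bot_of_card_primeFactors_le_one (h : (Nat.card G).primeFactors.card ≤ 1) :
    coprimeGraph G = ⊥ := by
  ext v w
  simpa using fun hvw => absurd (two_le_card_primeFactors_of_adj hvw) (by omega)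

theorem subsingleton_of_not_subsingleton_nontrivialPSubgroups
    (hfree : (completeBipartiteGraph (Fin 2) (Fin 2)).Free (coprimeGraph G)) {p : ℕ}
    (hp : p.Prime) (h : ¬ (nontrivialPSubgroups G p).Subsingleton) :
    {K : Subgroup G | K ≠ ⊥ ∧ ¬ p ∣ Nat.card K}.Subsingleton := by
  intro K₁ hK₁ K₂ hK₂
  by_contra hK
  obtain ⟨H₁, hH₁, H₂, hH₂, hH⟩ := Set.not_subsingleton_iff.mp h
  have := Fact.mk hp
  obtain ⟨k₁, hk₁⟩ := IsPGroup.iff_card.mp hH₁.2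
  obtain ⟨k₂, hk₂⟩ := IsPGroup.iff_card.mp hH₂.2
  refine hfree (completeBipartiteGraph_two_two_isContained hH hK hH₁.1 hH₂.1 hK₁.1 hK₂.1 ?_)
  rw [hk₁, hk₂, ← pow_add]
  exact Nat.Coprime.pow_left _ ((Nat.Prime.coprime_iff_not_dvd hp).mpr
    fun hdvd => (hp.dvd_mul.mp hdvd).elim hK₁.2 hK₂.2)

theorem subsingleton_nontrivialPSubgroups_or
    (hfree : (completeBipartiteGraph (Fin 2) (Fin 2)).Free (coprimeGraph G)) {p q : ℕ}
    (hp : p.Prime) (hq : q.Prime) (hpq : p ≠ q) :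
    (nontrivialPSubgroups G p).Subsingleton ∨ (nontrivialPSubgroups G q).Subsingleton :=
  or_iff_not_imp_left.mpr fun h =>
    (subsingleton_of_not_subsingleton_nontrivialPSubgroups hfree hp h).anti
      fun _ hK => ⟨hK.1, not_dvd_card_of_mem_nontrivialPSubgroups hp hq hpq hK⟩

theorem subsingleton_nontrivialPSubgroups_of_three
    (hfree : (completeBipartiteGraph (Fin 2) (Fin 2)).Free (coprimeGraph G)) {p q r : ℕ}
    (hp : p.Prime) (hq : q.Prime) (hr : r.Prime) (hpq : p ≠ q) (hpr : p ≠ r) (hqr : q ≠ r)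
    (hqG : q ∣ Nat.card G) (hrG : r ∣ Nat.card G) : (nontrivialPSubgroups G p).Subsingleton := by
  by_contra h
  obtain ⟨Q, hQ⟩ := exists_subgroup_card_eq_prime hq hqG
  obtain ⟨R, hR⟩ := exists_subgroup_card_eq_prime hr hrG
  have hmem : ∀ {s} {S : Subgroup G}, s.Prime → p ≠ s → Nat.card S = s →
      S ∈ {K : Subgroup G | K ≠ ⊥ ∧ ¬ p ∣ Nat.card K} := fun hs hps hS =>
    ⟨Subgroup.ne_bot_of_card_eq_prime hs hS,
      hS ▸ fun hdvd => hps ((Nat.prime_dvd_prime_iff_eq hp hs).mp hdvd)⟩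
  have hQR := subsingleton_of_not_subsingleton_nontrivialPSubgroups hfree hp h
    (hmem hq hpq hQ) (hmem hr hpr hR)
  exact hqr (hQ.symm.trans (hQR ▸ hR))

theorem card_primeFactors_le_three
    (hfree : (completeBipartiteGraph (Fin 2) (Fin 2)).Free (coprimeGraph G)) :
    (Nat.card G).primeFactors.card ≤ 3 := by
  by_contra! h
  obtain ⟨t, ht, ht4⟩ := Finset.exists_subset_card_eq (show 4 ≤ _ from h)
  obtain ⟨p, q, r, s, hpq, hpr, hps, hqr, hqs, hrs, rfl⟩ := Finset.card_eq_four.mp ht4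
  have hsub : ∀ x ∈ ({p, q, r, s} : Finset ℕ), x.Prime ∧ ∃ H : Subgroup G, Nat.card H = x :=
    fun x hx => have hx := Nat.mem_primeFactors.mp (ht hx)
      ⟨hx.1, exists_subgroup_card_eq_prime hx.1 hx.2.1⟩
  obtain ⟨hp, P, hP⟩ := hsub p (by simp)
  obtain ⟨hq, Q, hQ⟩ := hsub q (by simp)
  obtain ⟨hr, R, hR⟩ := hsub r (by simp)
  obtain ⟨hs, S, hS⟩ := hsub s (by simp)
  refine hfree (completeBipartiteGraph_two_two_isContained (H₁ := P) (H₂ := Q) (K₁ := R)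
    (fun h => hpq (by rw [← hP, ← hQ, h])) (fun h => hrs (by rw [← hR, ← hS, h]))
    (Subgroup.ne_bot_of_card_eq_prime hp hP) (Subgroup.ne_bot_of_card_eq_prime hq hQ)
    (Subgroup.ne_bot_of_card_eq_prime hr hR) (Subgroup.ne_bot_of_card_eq_prime hs hS) ?_)
  rw [hP, hQ, hR, hS, Nat.coprime_mul_iff_left, Nat.coprime_mul_iff_right,
    Nat.coprime_mul_iff_right]
  simp only [Nat.coprime_primes, *, ne_eq, not_false_eq_true, and_self]

theorem exists_card_eq_pow_mul_of_primeFactors_eq_pair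
    (hfree : (completeBipartiteGraph (Fin 2) (Fin 2)).Free (coprimeGraph G)) {p q : ℕ}
    (hpq : p ≠ q) (hP : (Nat.card G).primeFactors = {p, q}) :
    ∃ p q α : ℕ, p.Prime ∧ q.Prime ∧ p ≠ q ∧ 1 ≤ α ∧ Nat.card G = p ^ α * q ∧
      ∃! H : Subgroup G, Nat.card H = q := by
  have hpP : p ∈ (Nat.card G).primeFactors := by simp [hP]
  have hqP : q ∈ (Nat.card G).primeFactors := by simp [hP]
  have hp := Nat.prime_of_mem_primeFactors hpP
  have hq := Nat.prime_of_mem_primeFactors hqP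
  wlog hsub : (nontrivialPSubgroups G q).Subsingleton generalizing p q
  · exact this hpq.symm (by rw [hP, Finset.pair_comm]) hqP hpP hq hp
      ((subsingleton_nontrivialPSubgroups_or hfree hp hq hpq).resolve_right hsub)
  have hn := (Nat.card_pos (α := G)).ne'
  exact ⟨p, q, _, hp, hq, hpq,
    hp.factorization_pos_of_dvd hn (Nat.dvd_of_mem_primeFactors hpP),
    Nat.eq_pow_factorization_mul_of_primeFactors_eq_pair hn hpq hP
      (not_sq_dvd_card_of_subsingleton_nontrivialPSubgroups hq hsub),
    existsUnique_card_eq_of_subsingleton_nontrivialPSubgroups hq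
      (Nat.dvd_of_mem_primeFactors hqP) hsub⟩

theorem exists_isCyclic_card_eq_mul_mul_of_primeFactors_eq_triple
    (hfree : (completeBipartiteGraph (Fin 2) (Fin 2)).Free (coprimeGraph G)) {p q r : ℕ}
    (hpq : p ≠ q) (hpr : p ≠ r) (hqr : q ≠ r) (hP : (Nat.card G).primeFactors = {p, q, r}) :
    ∃ p q r : ℕ, p.Prime ∧ q.Prime ∧ r.Prime ∧ p ≠ q ∧ p ≠ r ∧ q ≠ r ∧
      IsCyclic G ∧ Nat.card G = p * q * r := by
  have hmem : ∀ {x}, x ∈ ({p, q, r} : Finset ℕ) → x.Prime ∧ x ∣ Nat.card G := fun hx =>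
    ⟨Nat.prime_of_mem_primeFactors (hP ▸ hx), Nat.dvd_of_mem_primeFactors (hP ▸ hx)⟩
  obtain ⟨hp, hpG⟩ := hmem (x := p) (by simp)
  obtain ⟨hq, hqG⟩ := hmem (x := q) (by simp)
  obtain ⟨hr, hrG⟩ := hmem (x := r) (by simp)
  have h : ∀ x, x.Prime → x ∣ Nat.card G → (nontrivialPSubgroups G x).Subsingleton := by
    intro x hx hxG
    have : x ∈ ({p, q, r} : Finset ℕ) :=
      hP ▸ Nat.mem_primeFactors.mpr ⟨hx, hxG, Nat.card_pos.ne'⟩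
    simp only [Finset.mem_insert, Finset.mem_singleton] at this
    rcases this with rfl | rfl | rfl
    · exact subsingleton_nontrivialPSubgroups_of_three hfree hx hq hr hpq hpr hqr hqG hrG
    · exact subsingleton_nontrivialPSubgroups_of_three hfree hx hp hr hpq.symm hqr hpr hpG hrG
    · exact subsingleton_nontrivialPSubgroups_of_three hfree hx hp hq hpr.symm hqr.symm hpq
        hpG hqG
  refine ⟨p, q, r, hp, hq, hr, hpq, hpr, hqr, isCyclic_of_subsingleton_nontrivialPSubgroups h, ?_⟩
  rw [← Nat.prod_primeFactors_of_squarefree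
      (squarefree_card_of_subsingleton_nontrivialPSubgroups h), hP,
    Finset.prod_insert (by simp [hpq, hpr]), Finset.prod_pair hqr, mul_assoc]

theorem free_of_card_eq_pow_mul {p q α : ℕ} (hp : p.Prime) (hq : q.Prime)
    (hG : Nat.card G = p ^ α * q) (hQ : ∃! H : Subgroup G, Nat.card H = q) :
    (completeBipartiteGraph (Fin 2) (Fin 2)).Free (coprimeGraph G) := by
  have hcard (v : {H : Subgroup G // H ≠ ⊥ ∧ H ≠ ⊤}) (hv : ¬ p ∣ Nat.card v.1) :
      Nat.card v.1 = q := by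
    have hdvd : Nat.card v.1 ∣ p ^ α * q := hG ▸ v.1.card_subgroup_dvd_card
    have hcop := ((Nat.Prime.coprime_iff_not_dvd hp).mpr hv).symm.pow_right α
    exact ((Nat.dvd_prime hq).mp (hcop.dvd_of_dvd_mul_left hdvd)).resolve_left
      (one_lt_card v).ne'
  refine completeBipartiteGraph_two_two_free_of_subsingleton_cover (S := {v | Nat.card v.1 = q})
    (fun v hv w hw => Subtype.ext (hQ.unique hv hw)) fun v w hvw => ?_
  by_cases hv : p ∣ Nat.card v.1
  · exact .inr (hcard w fun hw => hp.one_lt.ne' (Nat.eq_one_of_dvd_coprimes hvw.2 hv hw))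
  · exact .inl (hcard v hv)

theorem free_of_isCyclic_of_squarefree [IsCyclic G] (hG : Squarefree (Nat.card G))
    (h3 : (Nat.card G).primeFactors.card ≤ 3) :
    (completeBipartiteGraph (Fin 2) (Fin 2)).Free (coprimeGraph G) := by
  have hprod : ∀ v : {H : Subgroup G // H ≠ ⊥ ∧ H ≠ ⊤},
      ∏ x ∈ (Nat.card v.1).primeFactors, x = Nat.card v.1 := fun v =>
    Nat.prod_primeFactors_of_squarefree (hG.squarefree_of_dvd v.1.card_subgroup_dvd_card)
  refine completeBipartiteGraph_two_two_free_of_injective_disjoint h3 (fun v w hvw => ?_)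
    (fun v => Nat.nonempty_primeFactors.mpr (one_lt_card v)) primeFactors_subset
    fun v w hvw => hvw.2.disjoint_primeFactors
  exact Subtype.ext (IsCyclic.subgroup_eq_of_card_eq (by rw [← hprod v, ← hprod w, hvw]))

theorem free_of_isCyclic_of_card_eq_mul_mul [IsCyclic G] {p q r : ℕ} (hp : p.Prime)
    (hq : q.Prime) (hr : r.Prime) (hpq : p ≠ q) (hpr : p ≠ r) (hqr : q ≠ r)
    (hG : Nat.card G = p * q * r) :
    (completeBipartiteGraph (Fin 2) (Fin 2)).Free (coprimeGraph G) := by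
  refine free_of_isCyclic_of_squarefree ?_ ?_ <;> rw [hG]
  · rw [Nat.squarefree_mul_iff, Nat.squarefree_mul_iff, Nat.coprime_mul_iff_left,
      Nat.coprime_primes hp hq, Nat.coprime_primes hp hr, Nat.coprime_primes hq hr]
    exact ⟨⟨hpr, hqr⟩, ⟨hpq, hp.squarefree, hq.squarefree⟩, hr.squarefree⟩
  · rw [Nat.primeFactors_mul (mul_ne_zero hp.ne_zero hq.ne_zero) hr.ne_zero,
      Nat.primeFactors_mul hp.ne_zero hq.ne_zero, hp.primeFactors, hq.primeFactors,
      hr.primeFactors]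
    grind [Finset.card_union_le, Finset.card_singleton]

end coprimeGraph

theorem coprimeGraph_K22_free_iff_general {G : Type*} [Group G] [Finite G] :
    (¬ ∃ f : completeBipartiteGraph (Fin 2) (Fin 2) →g coprimeGraph G,
        Function.Injective f) ↔
      ((∃ p : ℕ, p.Prime ∧ IsPGroup p G) ∨
       (∃ p q α : ℕ, p.Prime ∧ q.Prime ∧ p ≠ q ∧ 1 ≤ α ∧ Nat.card G = p ^ α * q ∧
          ∃! H : Subgroup G, Nat.card H = q) ∨
       (∃ p q r : ℕ, p.Prime ∧ q.Prime ∧ r.Prime ∧ p ≠ q ∧ p ≠ r ∧ q ≠ r ∧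
          IsCyclic G ∧ Nat.card G = p * q * r)) := by
  rw [← isContained_iff_exists_injective_hom]
  constructor
  · intro hfree
    rcases (by have := coprimeGraph.card_primeFactors_le_three hfree; omega :
      (Nat.card G).primeFactors.card ≤ 1 ∨ (Nat.card G).primeFactors.card = 2 ∨
        (Nat.card G).primeFactors.card = 3) with h | h | h
    · exact .inl (exists_isPGroup_iff_card_primeFactors_le_one.mpr h)
    · obtain ⟨p, q, hpq, hP⟩ := Finset.card_eq_two.mp h
      exact .inr (.inl
        (coprimeGraph.exists_card_eq_pow_mul_of_primeFactors_eq_pair hfree hpq hP))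
    · obtain ⟨p, q, r, hpq, hpr, hqr, hP⟩ := Finset.card_eq_three.mp h
      exact .inr (.inr (coprimeGraph.exists_isCyclic_card_eq_mul_mul_of_primeFactors_eq_triple
        hfree hpq hpr hqr hP))
  · rintro (hG | ⟨p, q, α, hp, hq, -, -, hG, hQ⟩ |
      ⟨p, q, r, hp, hq, hr, hpq, hpr, hqr, _, hG⟩)
    · rw [coprimeGraph.eq_bot_of_card_primeFactors_le_one
        (exists_isPGroup_iff_card_primeFactors_le_one.mp hG)]
      exact free_bot (ne_of_apply_ne (·.Adj (.inl 0) (.inr 0)) (by simp))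
    · exact coprimeGraph.free_of_card_eq_pow_mul hp hq hG hQ
    · exact coprimeGraph.free_of_isCyclic_of_card_eq_mul_mul hp hq hr hpq hpr hqr hG

theorem coprimeGraph_K22_free_iff {G : Type*} [Group G] [Finite G]
    (hG : 1 < Nat.card G) :
    (¬ ∃ f : completeBipartiteGraph (Fin 2) (Fin 2) →g coprimeGraph G,
        Function.Injective f) ↔
      ((∃ p : ℕ, p.Prime ∧ IsPGroup p G) ∨
       (∃ p q α : ℕ, p.Prime ∧ q.Prime ∧ p ≠ q ∧ 1 ≤ α ∧ Nat.card G = p ^ α * q ∧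
          ∃! H : Subgroup G, Nat.card H = q) ∨
       (∃ p q r : ℕ, p.Prime ∧ q.Prime ∧ r.Prime ∧ p ≠ q ∧ p ≠ r ∧ q ≠ r ∧
          IsCyclic G ∧ Nat.card G = p * q * r)) :=
  coprimeGraph_K22_free_iff_general
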